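/- arXiv:2212.02368 — 2 statements merged into one kernel-verified Lean document; each statement's English description precedes it below -/
import Mathlib

section
/- Let Y be a finite subset of ℤⁿ containing the standard basis vectors e₁, …, eₙ, such that any n linearly independent elements of Y form a ℤ-basis of ℤⁿ. If the all-ones vector (1, 1, …, 1) belongs to Y, then every element of Y has either all coordinates ≥ 0 or all coordinates ≤ 0 (hence, after changing signatures of some elements, all entries of all elements of Y lie in {0, 1}). -/
/-!
If some `A ∈ Y` had coordinates `A i < 0 < A j`, replace the rows `i` and `j` of the identity
matrix by `A` and by the all-ones vector. All rows lie in `Y`, and the determinant is the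
`2 × 2` minor `A i - A j ≤ -2`, which is nonzero but not a unit.
-/

namespace Matrix

theorem updateRow_updateRow_one_mem {ι R : Type*} [DecidableEq ι] [Zero R] [One R]
    {S : Set (ι → R)} (hS : ∀ k, Pi.single k 1 ∈ S)
    {i j : ι} {u v : ι → R} (hu : u ∈ S) (hv : v ∈ S) (k : ι) :
    ((1 : Matrix ι ι R).updateRow j u).updateRow i v k ∈ S := by
  by_cases hki : k = i
  · rw [hki, updateRow_self]
    exact hv
  rw [updateRow_ne hki]
  by_cases hkj : k = j
  · rw [hkj, updateRow_self]
    exact hu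
  rw [updateRow_ne hkj]
  convert hS k using 1
  ext l
  exact one_eq_pi_single

variable {ι R : Type*} [Fintype ι] [DecidableEq ι] [CommRing R]

theorem det_one_updateRow (j : ι) (u : ι → R) : ((1 : Matrix ι ι R).updateRow j u).det = u j := by
  have hu : ∑ k, u k • (1 : Matrix ι ι R) k = u := by
    ext l
    simp [Finset.sum_apply, one_apply]
  conv_lhs => rw [← hu, det_updateRow_sum]
  simp

theorem det_updateRow_updateRow_one_const {i j : ι} (hij : i ≠ j) (v : ι → R) :
    (((1 : Matrix ι ι R).updateRow j fun _ ↦ 1).updateRow i v).det = v i - v j := by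
  set N := (1 : Matrix ι ι R).updateRow j fun _ ↦ 1
  -- `v = v j • 1 + ∑_{k ≠ j} (v k - v j) • e_k`, and these are the rows of `N`
  set c : ι → R := Function.update (fun k ↦ v k - v j) j (v j)
  have hv : ∑ k, c k • N k = v := by
    ext l
    simp only [Finset.sum_apply, N, c, Pi.smul_apply, updateRow_apply, one_apply, smul_eq_mul]
    by_cases hl : l = j
    · subst hl
      rw [Fintype.sum_eq_single l (by intro k hk; simp [hk])]
      simp
    · rw [Fintype.sum_eq_add j l (Ne.symm hl) (by intro k hk; simp [hk.1, hk.2])]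
      simp [hl]
  conv_lhs => rw [← hv, det_updateRow_sum, det_one_updateRow]
  simp [c, Function.update_of_ne hij]

end Matrix

/-- For a finite set `Y ⊆ ℤⁿ` containing the standard basis vectors, such that any `n`
linearly independent elements of `Y` form a `ℤ`-basis of `ℤⁿ`: if the all-ones vector
belongs to `Y`, then every element of `Y` has either all coordinates `≥ 0` or all
coordinates `≤ 0`. -/
theorem stmt11 (n : ℕ) (Y : Finset (Fin n → ℤ))
    (hbasis : ∀ i : Fin n, Pi.single i 1 ∈ Y)
    (hprime : ∀ B : Fin n → (Fin n → ℤ), (∀ i, B i ∈ Y) → LinearIndependent ℤ B →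
      (Matrix.of B).det = 1 ∨ (Matrix.of B).det = -1)
    (hones : (fun _ : Fin n => (1 : ℤ)) ∈ Y) :
    ∀ A ∈ Y, (∀ i, 0 ≤ A i) ∨ (∀ i, A i ≤ 0) := by
  intro A hA
  by_contra! hsign
  obtain ⟨⟨i, hi⟩, ⟨j, hj⟩⟩ := hsign
  have hij : i ≠ j := by rintro rfl; omega
  set M := ((1 : Matrix (Fin n) (Fin n) ℤ).updateRow j fun _ ↦ 1).updateRow i A
  have hdet : M.det = A i - A j := Matrix.det_updateRow_updateRow_one_const hij A
  have hrows : ∀ k, M k ∈ Y := fun k ↦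
    Matrix.updateRow_updateRow_one_mem (S := (Y : Set (Fin n → ℤ))) hbasis hones hA k
  have hunit := hprime M hrows (Matrix.linearIndependent_rows_of_det_ne_zero (by rw [hdet]; omega))
  change M.det = 1 ∨ M.det = -1 at hunit
  rw [hdet] at hunit
  omega
end

section
/- Let n ≤ 4 and let Q be an extreme point of Ω₂. Then there exist at least n(n+1)/2 vectors v ∈ ℤⁿ with v Q vᵀ = 1 that are pairwise non-proportional (no two equal up to sign); i.e., the lattice with Gram matrix Q has at least n(n+1)/2 shortest vectors counted up to ±1. -/
open Matrix

/-- The quadratic form `v Q vᵀ` of a real matrix evaluated at an integer vector. -/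
noncomputable def intQuadForm {n : ℕ} (Q : Matrix (Fin n) (Fin n) ℝ) (v : Fin n → ℤ) : ℝ :=
  dotProduct (fun i => (v i : ℝ)) (Q.mulVec fun i => (v i : ℝ))

/-- The set `Ω₂` of symmetric positive definite matrices with unit diagonal whose
associated quadratic form is `≥ 1` on all nonzero integer vectors. -/
def Omega2 (n : ℕ) : Set (Matrix (Fin n) (Fin n) ℝ) :=
  {Q | Q.IsSymm ∧ Q.PosDef ∧ (∀ i, Q i i = 1) ∧
    ∀ v : Fin n → ℤ, v ≠ 0 → 1 ≤ intQuadForm Q v}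

/-!
Let `Q` be an extreme point of `Ω₂` and `D` a symmetric matrix with `v D vᵀ = 0` for every
minimal vector `v` of `Q` (those with `v Q vᵀ = 1`; the unit vectors are among them, so `D` has
zero diagonal). For small `s` the form of `Q + s D` is at least half that of `Q`, which gives
positive definiteness and handles the integer vectors with `v Q vᵀ ≥ 2`; only finitely many
integer vectors have `v Q vᵀ < 2`, and continuity handles those. So `Q ± s D ∈ Ω₂`, and
extremality forces `D = 0`. Hence the functionals `D ↦ v D vᵀ`, `v` minimal, span the dual of the
`n(n+1)/2`-dimensional space of symmetric matrices, and `n(n+1)/2` of them are linearly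
independent. As `v` and `-v` give the same functional, these minimal vectors are distinct up to
sign.
-/

open Filter Topology

section QuadraticBounds

variable {ι : Type*} [Fintype ι]

theorem smul_dotProduct_mulVec_smul (A : Matrix ι ι ℝ) (a : ℝ) (x : ι → ℝ) :
    (a • x) ⬝ᵥ A *ᵥ (a • x) = a ^ 2 * (x ⬝ᵥ A *ᵥ x) := by
  rw [mulVec_smul, smul_dotProduct, dotProduct_smul, smul_eq_mul, smul_eq_mul]
  ring

theorem exists_mem_sphere_dotProduct_mulVec_eq (A : Matrix ι ι ℝ) {x : ι → ℝ} (hx : x ≠ 0) :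
    ∃ u ∈ Metric.sphere (0 : ι → ℝ) 1, x ⬝ᵥ A *ᵥ x = ‖x‖ ^ 2 * (u ⬝ᵥ A *ᵥ u) := by
  have hx' : ‖x‖ ≠ 0 := norm_ne_zero_iff.mpr hx
  refine ⟨‖x‖⁻¹ • x, ?_, ?_⟩
  · rw [mem_sphere_zero_iff_norm, norm_smul, norm_inv, norm_norm, inv_mul_cancel₀ hx']
  · rw [smul_dotProduct_mulVec_smul, ← mul_assoc, inv_pow, mul_inv_cancel₀ (pow_ne_zero 2 hx'),
      one_mul]

theorem Matrix.PosDef.exists_pos_mul_sq_norm_le {A : Matrix ι ι ℝ} (hA : A.PosDef) :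
    ∃ c > 0, ∀ x : ι → ℝ, c * ‖x‖ ^ 2 ≤ x ⬝ᵥ A *ᵥ x := by
  obtain ⟨c, hc, hcA⟩ := (isCompact_sphere (0 : ι → ℝ) 1).exists_forall_le'
    (by fun_prop : Continuous fun x : ι → ℝ => x ⬝ᵥ A *ᵥ x).continuousOn
    (a := 0) fun u hu => by
      simpa using hA.dotProduct_mulVec_pos (ne_zero_of_mem_unit_sphere ⟨u, hu⟩)
  refine ⟨c, hc, fun x => ?_⟩
  rcases eq_or_ne x 0 with rfl | hx
  · simp
  obtain ⟨u, hu, hxu⟩ := exists_mem_sphere_dotProduct_mulVec_eq A hx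
  rw [hxu, mul_comm c]
  exact mul_le_mul_of_nonneg_left (hcA u hu) (sq_nonneg _)

theorem exists_abs_dotProduct_mulVec_le (A : Matrix ι ι ℝ) :
    ∃ K, ∀ x : ι → ℝ, |x ⬝ᵥ A *ᵥ x| ≤ K * ‖x‖ ^ 2 := by
  obtain ⟨K, hK⟩ := (isCompact_sphere (0 : ι → ℝ) 1).exists_bound_of_continuousOn
    (by fun_prop : Continuous fun x : ι → ℝ => x ⬝ᵥ A *ᵥ x).continuousOn
  refine ⟨K, fun x => ?_⟩
  rcases eq_or_ne x 0 with rfl | hx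
  · simp
  obtain ⟨u, hu, hxu⟩ := exists_mem_sphere_dotProduct_mulVec_eq A hx
  rw [hxu, abs_mul, abs_of_nonneg (sq_nonneg _), mul_comm K]
  exact mul_le_mul_of_nonneg_left (hK u hu) (sq_nonneg _)

theorem Matrix.PosDef.eventually_half_le_dotProduct_add_smul_mulVec {A : Matrix ι ι ℝ}
    (hA : A.PosDef) (B : Matrix ι ι ℝ) :
    ∀ᶠ s in 𝓝 (0 : ℝ), ∀ x : ι → ℝ, (x ⬝ᵥ A *ᵥ x) / 2 ≤ x ⬝ᵥ (A + s • B) *ᵥ x := by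
  obtain ⟨c, hc, hcA⟩ := hA.exists_pos_mul_sq_norm_le
  obtain ⟨K, hK⟩ := exists_abs_dotProduct_mulVec_le B
  have hsmall : ∀ᶠ s in 𝓝 (0 : ℝ), |s| * K < c / 2 :=
    ContinuousAt.eventually_lt (by fun_prop) continuousAt_const (by simpa using half_pos hc)
  filter_upwards [hsmall] with s hs x
  have hBx : |s * (x ⬝ᵥ B *ᵥ x)| ≤ c / 2 * ‖x‖ ^ 2 := calc
    |s * (x ⬝ᵥ B *ᵥ x)| ≤ |s| * (K * ‖x‖ ^ 2) := by
      rw [abs_mul]; exact mul_le_mul_of_nonneg_left (hK x) (abs_nonneg s)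
    _ = |s| * K * ‖x‖ ^ 2 := by ring
    _ ≤ c / 2 * ‖x‖ ^ 2 := mul_le_mul_of_nonneg_right hs.le (sq_nonneg _)
  rw [add_mulVec, smul_mulVec, dotProduct_add, dotProduct_smul, smul_eq_mul]
  linarith [neg_abs_le (s * (x ⬝ᵥ B *ᵥ x)), hcA x]

end QuadraticBounds

theorem eq_zero_of_mem_extremePoints_of_eventually_add_smul_mem {E : Type*} [AddCommGroup E]
    [Module ℝ E] {A : Set E} {x d : E} (hx : x ∈ A.extremePoints ℝ)
    (h : ∀ᶠ s in 𝓝 (0 : ℝ), x + s • d ∈ A) : d = 0 := by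
  obtain ⟨ε, hε, hεA⟩ := Metric.eventually_nhds_iff.1 h
  have hmem : ∀ s : ℝ, |s| < ε → x + s • d ∈ A := fun s hs => hεA (by simpa using hs)
  have hε2 : |ε / 2| < ε := by rw [abs_of_pos (half_pos hε)]; linarith
  have hseg : x ∈ openSegment ℝ (x + (ε / 2) • d) (x + (-(ε / 2)) • d) :=
    ⟨1 / 2, 1 / 2, by norm_num, by norm_num, by norm_num, by module⟩
  have hfix := hx.2 (hmem _ hε2) (hmem _ (by rwa [abs_neg])) hseg
  rw [add_eq_left, smul_eq_zero] at hfix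
  exact hfix.resolve_left (half_pos hε).ne'

section OfSym2

variable {ι R : Type*} [Semiring R]

def Matrix.ofSym2 : (Sym2 ι → R) →ₗ[R] Matrix ι ι R where
  toFun d := Matrix.of fun i j => d s(i, j)
  map_add' _ _ := rfl
  map_smul' _ _ := rfl

theorem Matrix.isSymm_ofSym2 (d : Sym2 ι → R) : (ofSym2 d).IsSymm :=
  IsSymm.ext fun _ _ => congrArg d Sym2.eq_swap

theorem Matrix.ofSym2_injective : Function.Injective (ofSym2 : (Sym2 ι → R) →ₗ[R] Matrix ι ι R) :=
  fun _ _ h => funext (Sym2.ind fun i j => congrFun₂ h i j)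

end OfSym2

theorem exists_linearIndependent_comp_of_span_image_eq_top {K V α : Type*} [DivisionRing K]
    [AddCommGroup V] [Module K V] [FiniteDimensional K V] {f : α → V} {s : Set α}
    (h : Submodule.span K (f '' s) = ⊤) {N : ℕ} (hN : Module.finrank K V = N) :
    ∃ v : Fin N → α, (∀ j, v j ∈ s) ∧ LinearIndependent K (f ∘ v) := by
  obtain ⟨g, hgs, -, hg⟩ := Submodule.exists_fun_fin_finrank_span_eq K (f '' s)
  have hcard : Module.finrank K (Submodule.span K (f '' s)) = N := by rw [h, finrank_top, hN]
  choose v hvs hfv using fun j : Fin N => hgs (Fin.cast hcard.symm j)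
  have hfv' : f ∘ v = g ∘ Fin.cast hcard.symm := funext hfv
  exact ⟨v, hvs, hfv' ▸ hg.comp _ (Fin.cast_injective _)⟩

theorem finrank_dual_sym2_fin (n : ℕ) :
    Module.finrank ℝ (Module.Dual ℝ (Sym2 (Fin n) → ℝ)) = n * (n + 1) / 2 := by
  rw [Subspace.dual_finrank_eq, Module.finrank_fintype_fun_eq_card, Sym2.card, Fintype.card_fin,
    Nat.choose_two_right, Nat.add_sub_cancel, mul_comm]

section Omega2

variable {n : ℕ}

theorem intQuadForm_zero (Q : Matrix (Fin n) (Fin n) ℝ) : intQuadForm Q 0 = 0 := by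
  simp [intQuadForm]

theorem intQuadForm_neg (Q : Matrix (Fin n) (Fin n) ℝ) (v : Fin n → ℤ) :
    intQuadForm Q (-v) = intQuadForm Q v := by
  have hcast : (fun i => ((-v) i : ℝ)) = -fun i => (v i : ℝ) := by ext; simp
  simp only [intQuadForm, hcast, mulVec_neg, neg_dotProduct, dotProduct_neg, neg_neg]

theorem intQuadForm_single (Q : Matrix (Fin n) (Fin n) ℝ) (i : Fin n) :
    intQuadForm Q (Pi.single i 1) = Q i i := by
  have hcast : (fun j => (((Pi.single i 1 : Fin n → ℤ) j : ℤ) : ℝ)) = Pi.single i 1 := by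
    ext j; simp [Pi.single_apply]
  simp [intQuadForm, hcast]

noncomputable def intQuadFormLinear (v : Fin n → ℤ) : Matrix (Fin n) (Fin n) ℝ →ₗ[ℝ] ℝ where
  toFun Q := intQuadForm Q v
  map_add' _ _ := by simp [intQuadForm, add_mulVec, dotProduct_add]
  map_smul' _ _ := by simp [intQuadForm, smul_mulVec, dotProduct_smul]

theorem intQuadForm_add_smul (Q D : Matrix (Fin n) (Fin n) ℝ) (s : ℝ) (v : Fin n → ℤ) :
    intQuadForm (Q + s • D) v = intQuadForm Q v + s * intQuadForm D v := by
  change intQuadFormLinear v (Q + s • D) = intQuadFormLinear v Q + s * intQuadFormLinear v D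
  rw [map_add, map_smul, smul_eq_mul]

theorem Matrix.PosDef.finite_setOf_intQuadForm_lt {Q : Matrix (Fin n) (Fin n) ℝ} (hQ : Q.PosDef)
    (r : ℝ) : {v : Fin n → ℤ | intQuadForm Q v < r}.Finite := by
  obtain ⟨c, hc, hcQ⟩ := hQ.exists_pos_mul_sq_norm_le
  refine (isCompact_closedBall (0 : Fin n → ℤ) √(r / c)).finite_of_discrete.subset fun v hv => ?_
  have hsq : ‖fun i => (v i : ℝ)‖ ^ 2 ≤ r / c := by
    rw [le_div_iff₀ hc, mul_comm]
    exact ((hcQ _).trans_lt hv).le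
  have hle := (abs_norm (fun i => (v i : ℝ))).symm.trans_le (Real.abs_le_sqrt hsq)
  rw [mem_closedBall_zero_iff, pi_norm_le_iff_of_nonneg (Real.sqrt_nonneg _)]
  exact fun i => (Int.norm_cast_real (v i)).symm.trans_le ((norm_le_pi_norm _ i).trans hle)

theorem eventually_add_smul_mem_Omega2 {Q D : Matrix (Fin n) (Fin n) ℝ} (hQ : Q ∈ Omega2 n)
    (hD : D.IsSymm) (hDQ : ∀ v, intQuadForm Q v = 1 → intQuadForm D v = 0) :
    ∀ᶠ s in 𝓝 (0 : ℝ), Q + s • D ∈ Omega2 n := by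
  obtain ⟨hQsymm, hQpos, hQdiag, hQmin⟩ := hQ
  have hshort : ∀ᶠ s in 𝓝 (0 : ℝ), ∀ v ∈ {v | intQuadForm Q v < 2}, v ≠ 0 →
      1 ≤ intQuadForm (Q + s • D) v := by
    refine (hQpos.finite_setOf_intQuadForm_lt 2).eventually_all.2 fun v _ => ?_
    by_cases hv : v = 0
    · exact .of_forall fun _ hv' => (hv' hv).elim
    simp only [intQuadForm_add_smul]
    rcases (hQmin v hv).eq_or_lt with h1 | h1
    · exact .of_forall fun s _ => by rw [hDQ v h1.symm, ← h1]; simp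
    · exact (ContinuousAt.eventually_lt continuousAt_const (by fun_prop) (by simpa using h1)).mono
        fun s hs _ => hs.le
  filter_upwards [hQpos.eventually_half_le_dotProduct_add_smul_mulVec D, hshort] with s hhalf hs
  refine ⟨hQsymm.add (hD.smul s), ?_, fun i => ?_, fun v hv => ?_⟩
  · refine .of_dotProduct_mulVec_pos (isHermitian_iff_isSymm.2 (hQsymm.add (hD.smul s)))
      fun x hx => ?_
    have hQx := hQpos.dotProduct_mulVec_pos hx
    rw [star_trivial] at hQx ⊢
    linarith [hhalf x]
  · have hDi : D i i = 0 := by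
      simpa [intQuadForm_single] using hDQ (Pi.single i 1) (by rw [intQuadForm_single, hQdiag])
    simp [hQdiag i, hDi]
  · by_cases hv2 : intQuadForm Q v < 2
    · exact hs v hv2 hv
    · have := hhalf fun i => (v i : ℝ)
      unfold intQuadForm at hv2 ⊢
      linarith

end Omega2

section Sym2Functional

variable {n : ℕ}

noncomputable def intQuadFormSym2 (v : Fin n → ℤ) : Module.Dual ℝ (Sym2 (Fin n) → ℝ) :=
  (intQuadFormLinear v).comp ofSym2

theorem intQuadFormSym2_neg (v : Fin n → ℤ) : intQuadFormSym2 (-v) = intQuadFormSym2 v :=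
  LinearMap.ext fun _ => intQuadForm_neg _ _

theorem span_intQuadFormSym2_eq_top {Q : Matrix (Fin n) (Fin n) ℝ}
    (hQ : Q ∈ (Omega2 n).extremePoints ℝ) :
    Submodule.span ℝ (intQuadFormSym2 '' {v | intQuadForm Q v = 1}) = ⊤ := by
  set W := Submodule.span ℝ (intQuadFormSym2 '' {v | intQuadForm Q v = 1})
  suffices W.dualCoannihilator = ⊥ by
    rw [← Subspace.dualCoannihilator_dualAnnihilator_eq (W := W), this,
      Submodule.dualAnnihilator_bot]
  refine eq_bot_iff.2 fun d hd => ?_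
  rw [Submodule.mem_dualCoannihilator] at hd
  have hD : ofSym2 d = 0 := eq_zero_of_mem_extremePoints_of_eventually_add_smul_mem hQ <|
    eventually_add_smul_mem_Omega2 hQ.1 (isSymm_ofSym2 d) fun v hv =>
      hd _ (Submodule.subset_span ⟨v, hv, rfl⟩)
  exact (Submodule.mem_bot ℝ).2 (ofSym2_injective (hD.trans (map_zero _).symm))

end Sym2Functional

theorem stmt18_general (n : ℕ) (Q : Matrix (Fin n) (Fin n) ℝ)
    (hQ : Q ∈ Set.extremePoints ℝ (Omega2 n)) :
    ∃ v : Fin (n * (n + 1) / 2) → (Fin n → ℤ),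
      (∀ j, v j ≠ 0 ∧ intQuadForm Q (v j) = 1) ∧
      ∀ j l, j ≠ l → v j ≠ v l ∧ v j ≠ -v l := by
  obtain ⟨v, hv, hli⟩ := exists_linearIndependent_comp_of_span_image_eq_top
    (span_intQuadFormSym2_eq_top hQ) (finrank_dual_sym2_fin n)
  refine ⟨v, fun j => ⟨fun h0 => ?_, hv j⟩, fun j l hjl =>
    ⟨fun h => hjl (hli.injective ?_), fun h => hjl (hli.injective ?_)⟩⟩
  · have h1 : intQuadForm Q (v j) = 1 := hv j
    rw [h0, intQuadForm_zero] at h1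
    exact zero_ne_one h1
  · simp [h]
  · simp [h, intQuadFormSym2_neg]

/-- For `n ≤ 4`, every extreme point `Q` of `Ω₂` admits at least `n(n+1)/2` integer
vectors with `v Q vᵀ = 1` that are pairwise distinct even up to sign. -/
theorem stmt18 (n : ℕ) (hn : n ≤ 4) (Q : Matrix (Fin n) (Fin n) ℝ)
    (hQ : Q ∈ Set.extremePoints ℝ (Omega2 n)) :
    ∃ v : Fin (n * (n + 1) / 2) → (Fin n → ℤ),
      (∀ j, v j ≠ 0 ∧ intQuadForm Q (v j) = 1) ∧
      ∀ j l, j ≠ l → v j ≠ v l ∧ v j ≠ -v l :=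
  stmt18_general n Q hQ
end
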